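/- For the Shor-code shared state |Ψ⟩, the reduced density matrix on D and qubits {2,3,5,6,8,9} (tracing out qubits 1,4,7) equals (1/2)(|+⟩⟨+|_D ⊗ ρ + |−⟩⟨−|_D ⊗ ρ'), where |±⟩=(|0⟩±|1⟩)/√2, ρ = (1/4)(|000000⟩⟨000000|+|001111⟩⟨001111|+|110011⟩⟨110011|+|111100⟩⟨111100|) and ρ' = (1/4)(|000011⟩⟨000011|+|001100⟩⟨001100|+|110000⟩⟨110000|+|111111⟩⟨111111|) on qubits (2,3,5,6,8,9). In particular this reduced state is separable across the cut D | {2,3,5,6,8,9}. -/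
import Mathlib


open Matrix Kronecker

/-- GHZ-type three-qubit states `|G_0⟩=(|000⟩+|111⟩)/√2`, `|G_1⟩=(|000⟩−|111⟩)/√2`. -/
noncomputable def G (j : Fin 2) (t : Fin 2 × Fin 2 × Fin 2) : ℂ :=
  if t = (0, 0, 0) then ((Real.sqrt 2 : ℂ))⁻¹
  else if t = (1, 1, 1) then (if j = 0 then ((Real.sqrt 2 : ℂ))⁻¹ else -((Real.sqrt 2 : ℂ))⁻¹)
  else 0

/-- `|Ψ⟩ = (1/√2) Σ_j |j⟩_D |G_j⟩_{123} |G_j⟩_{456} |G_j⟩_{789}`. -/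
noncomputable def Ψ
    (x : Fin 2 × (Fin 2 × Fin 2 × Fin 2) × (Fin 2 × Fin 2 × Fin 2) × (Fin 2 × Fin 2 × Fin 2)) :
    ℂ :=
  ((Real.sqrt 2 : ℂ))⁻¹ * G x.1 x.2.1 * G x.1 x.2.2.1 * G x.1 x.2.2.2

/-- The outer product `|v⟩⟨v|`. -/
def outer {n : Type*} (v : n → ℂ) : Matrix n n ℂ :=
  Matrix.of fun i j => v i * star (v j)

/-- Index type for qubits (2,3,5,6,8,9), grouped into the pairs (2,3), (5,6), (8,9). -/
abbrev Six := (Fin 2 × Fin 2) × (Fin 2 × Fin 2) × (Fin 2 × Fin 2)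

/-- The computational basis state of qubits (2,3,5,6,8,9) labelled by `t`. -/
def ket6 (t : Six) : Six → ℂ := fun s => if s = t then 1 else 0

/-- `|+⟩ = (|0⟩+|1⟩)/√2`. -/
noncomputable def plusv : Fin 2 → ℂ := fun _ => ((Real.sqrt 2 : ℂ))⁻¹

/-- `|−⟩ = (|0⟩−|1⟩)/√2`. -/
noncomputable def minusv : Fin 2 → ℂ :=
  fun i => if i = 0 then ((Real.sqrt 2 : ℂ))⁻¹ else -((Real.sqrt 2 : ℂ))⁻¹

/-- `ρ = (1/4)(|000000⟩⟨000000|+|001111⟩⟨001111|+|110011⟩⟨110011|+|111100⟩⟨111100|)`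
on qubits (2,3,5,6,8,9). -/
noncomputable def ρplus : Matrix Six Six ℂ :=
  (1 / 4 : ℂ) • (outer (ket6 ((0,0),(0,0),(0,0))) + outer (ket6 ((0,0),(1,1),(1,1)))
    + outer (ket6 ((1,1),(0,0),(1,1))) + outer (ket6 ((1,1),(1,1),(0,0))))

/-- `ρ' = (1/4)(|000011⟩⟨000011|+|001100⟩⟨001100|+|110000⟩⟨110000|+|111111⟩⟨111111|)`
on qubits (2,3,5,6,8,9). -/
noncomputable def ρminus : Matrix Six Six ℂ :=
  (1 / 4 : ℂ) • (outer (ket6 ((0,0),(0,0),(1,1))) + outer (ket6 ((0,0),(1,1),(0,0)))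
    + outer (ket6 ((1,1),(0,0),(0,0))) + outer (ket6 ((1,1),(1,1),(1,1))))

/-- The reduced state of the dealer and qubits (2,3,5,6,8,9), obtained by tracing out
qubits 1, 4 and 7 from `|Ψ⟩⟨Ψ|`. -/
noncomputable def ρD235689 : Matrix (Fin 2 × Six) (Fin 2 × Six) ℂ :=
  Matrix.of fun x y =>
    ∑ a : Fin 2, ∑ b : Fin 2, ∑ c : Fin 2,
      Ψ (x.1, (a, x.2.1), (b, x.2.2.1), (c, x.2.2.2)) *
        star (Ψ (y.1, (a, y.2.1), (b, y.2.2.1), (c, y.2.2.2)))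

/-! ### Auxiliary machinery -/

/-- Integer-valued block cross-sum. -/
def czP (d e : Fin 2) (u v : Fin 2 × Fin 2) : Int :=
  if u = v ∧ u = (0,0) then 1
  else if u = v ∧ u = (1,1) then (if d = e then 1 else -1) else 0

def PZ (u v : Six) : Int :=
  if u = v ∧ (u = ((0,0),(0,0),(0,0)) ∨ u = ((0,0),(1,1),(1,1))
      ∨ u = ((1,1),(0,0),(1,1)) ∨ u = ((1,1),(1,1),(0,0))) then 1 else 0

def MZ (u v : Six) : Int :=
  if u = v ∧ (u = ((0,0),(0,0),(1,1)) ∨ u = ((0,0),(1,1),(0,0))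
      ∨ u = ((1,1),(0,0),(0,0)) ∨ u = ((1,1),(1,1),(1,1))) then 1 else 0

def sgn (d e : Fin 2) : Int := if d = e then 1 else -1

set_option maxRecDepth 10000 in
theorem keyZ : ∀ (d e : Fin 2) (u v : Six),
    czP d e u.1 v.1 * czP d e u.2.1 v.2.1 * czP d e u.2.2 v.2.2
      = PZ u v + sgn d e * MZ u v := by decide

lemma hs : ((Real.sqrt 2 : ℂ))⁻¹ * ((Real.sqrt 2 : ℂ))⁻¹ = 1/2 := by
  rw [← mul_inv]; norm_cast
  rw [Real.mul_self_sqrt (by norm_num)]; norm_num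

lemma Fcomp (d e : Fin 2) (u v : Fin 2 × Fin 2) :
    (∑ a : Fin 2, G d (a, u.1, u.2) * star (G e (a, v.1, v.2)))
      = (1/2 : ℂ) * (czP d e u v : ℤ) := by
  obtain ⟨u1, u2⟩ := u; obtain ⟨v1, v2⟩ := v
  fin_cases d <;> fin_cases e <;> fin_cases u1 <;> fin_cases u2 <;> fin_cases v1 <;>
    fin_cases v2 <;> simp [G, czP, Fin.sum_univ_two, Prod.ext_iff, hs]

lemma factored (d e : Fin 2) (u v : Six) :
    ρD235689 (d, u) (e, v) =
      (1/2 : ℂ) * ((∑ a : Fin 2, G d (a, u.1.1, u.1.2) * star (G e (a, v.1.1, v.1.2)))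
        * (∑ b : Fin 2, G d (b, u.2.1.1, u.2.1.2) * star (G e (b, v.2.1.1, v.2.1.2)))
        * (∑ c : Fin 2, G d (c, u.2.2.1, u.2.2.2) * star (G e (c, v.2.2.1, v.2.2.2)))) := by
  obtain ⟨⟨u1, u2⟩, ⟨u3, u4⟩, u5, u6⟩ := u
  obtain ⟨⟨v1, v2⟩, ⟨v3, v4⟩, v5, v6⟩ := v
  simp only [ρD235689, Ψ, Matrix.of_apply, Fin.sum_univ_two, _root_.map_mul, map_inv₀,
    Complex.star_def, Complex.conj_ofReal]
  rw [← hs]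
  ring

lemma outer_ket6 (t u v : Six) : outer (ket6 t) u v = if u = t ∧ v = t then 1 else 0 := by
  simp only [outer, ket6, Matrix.of_apply]
  split_ifs <;> simp_all

lemma rho_plus_apply (u v : Six) : ρplus u v = (1/4 : ℂ) * (PZ u v : ℤ) := by
  simp only [ρplus, PZ, Matrix.smul_apply, Matrix.add_apply, outer_ket6, smul_eq_mul]
  by_cases huv : u = v
  · subst huv
    split_ifs <;> simp_all (config := { decide := true })
  · split_ifs <;> simp_all

lemma rho_minus_apply (u v : Six) : ρminus u v = (1/4 : ℂ) * (MZ u v : ℤ) := by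
  simp only [ρminus, MZ, Matrix.smul_apply, Matrix.add_apply, outer_ket6, smul_eq_mul]
  by_cases huv : u = v
  · subst huv
    split_ifs <;> simp_all (config := { decide := true })
  · split_ifs <;> simp_all

lemma plus_outer (d e : Fin 2) : outer plusv d e = (1/2 : ℂ) := by
  simp [outer, plusv, Complex.star_def, map_inv₀, Complex.conj_ofReal, hs]

lemma minus_outer (d e : Fin 2) : outer minusv d e = (1/2 : ℂ) * (sgn d e : ℤ) := by
  fin_cases d <;> fin_cases e <;>
    simp [outer, minusv, sgn, Complex.star_def, map_inv₀, Complex.conj_ofReal, hs]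

/-- Tracing out qubits 1,4,7 of the Shor-code shared state yields
`(1/2)(|+⟩⟨+|_D ⊗ ρ + |−⟩⟨−|_D ⊗ ρ')`, which is manifestly separable across the cut
`D | {2,3,5,6,8,9}`. -/
theorem shor_traced_147 :
    ρD235689 = (1 / 2 : ℂ) • (outer plusv ⊗ₖ ρplus + outer minusv ⊗ₖ ρminus) := by
  ext ⟨d, u⟩ ⟨e, v⟩
  rw [factored]
  rw [Fcomp d e (u.1.1, u.1.2) (v.1.1, v.1.2), Fcomp d e (u.2.1.1, u.2.1.2) (v.2.1.1, v.2.1.2),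
    Fcomp d e (u.2.2.1, u.2.2.2) (v.2.2.1, v.2.2.2)]
  simp only [Matrix.smul_apply, Matrix.add_apply, Matrix.kroneckerMap_apply, smul_eq_mul,
    plus_outer, minus_outer, rho_plus_apply, rho_minus_apply]
  have h : ((czP d e u.1 v.1 * czP d e u.2.1 v.2.1 * czP d e u.2.2 v.2.2 : ℤ) : ℂ)
      = ((PZ u v + sgn d e * MZ u v : ℤ) : ℂ) := by exact_mod_cast keyZ d e u v
  push_cast at h
  have hu1 : ((u.1.1, u.1.2) : Fin 2 × Fin 2) = u.1 := rfl
  have hu2 : ((u.2.1.1, u.2.1.2) : Fin 2 × Fin 2) = u.2.1 := rfl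
  have hu3 : ((u.2.2.1, u.2.2.2) : Fin 2 × Fin 2) = u.2.2 := rfl
  have hv1 : ((v.1.1, v.1.2) : Fin 2 × Fin 2) = v.1 := rfl
  have hv2 : ((v.2.1.1, v.2.1.2) : Fin 2 × Fin 2) = v.2.1 := rfl
  have hv3 : ((v.2.2.1, v.2.2.2) : Fin 2 × Fin 2) = v.2.2 := rfl
  rw [hu1, hu2, hu3, hv1, hv2, hv3]
  linear_combination (1/16 : ℂ) * h
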